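/- arXiv:1206.1422 — 2 statements merged into one kernel-verified Lean document; each statement's English description precedes it below -/
import Mathlib

section
/- For every finite set of distinct points p_1, …, p_n in ℝ² with a fixed stacking order, the visible perimeter of the unscaled configuration is at least the limit superior, as ε → 0⁺, of the visible perimeter of the configuration scaled by ε: limsup_{ε→0⁺} vis(εp_1, …, εp_n) ≤ vis(p_1, …, p_n). -/
open MeasureTheory Filter Set Metric
open scoped ENNReal NNReal Topology

noncomputable section

/-- The Euclidean plane. -/
abbrev Pt : Type := EuclideanSpace ℝ (Fin 2)

/-- The visible perimeter of the arrangement of unit disks centered at `p 0, …, p (n-1)`,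
where `p i` is stacked below `p j` whenever `i < j`: the sum over `i` of the
1-dimensional Hausdorff measure of the part of the boundary circle of the disk at `p i`
not covered by the (open) disks stacked below it. -/
def vis {n : ℕ} (p : Fin n → Pt) : ℝ≥0∞ :=
  ∑ i : Fin n, μH[1] {x : Pt | dist x (p i) = 1 ∧ ∀ j : Fin n, j < i → 1 ≤ dist x (p j)}

/- The external angles associated to the sequence of points `p 0, …, p (n-1)`:
`τ_1 = 2π`; for `i > 1`, `τ_i = 0` if `p i` lies in the convex hull of the previous
points, and otherwise `τ_i` is the arc-length measure of the set of unit vectors `u`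
with `⟨u, p i⟩ > ⟨u, p j⟩` for all `j < i`. -/
open Classical in
def extAngle {n : ℕ} (p : Fin n → Pt) (i : Fin n) : ℝ≥0∞ :=
  if (i : ℕ) = 0 then ENNReal.ofReal (2 * Real.pi)
  else if p i ∈ convexHull ℝ (p '' {j : Fin n | j < i}) then 0
  else μH[1] {u : Pt | ‖u‖ = 1 ∧ ∀ j : Fin n, j < i →
    (inner ℝ u (p j) : ℝ) < (inner ℝ u (p i) : ℝ)}

/-- `vinf n` is `v(n)`: the infimum over all sets of `n` distinct points (encoded as
injective functions `Fin n → Pt`) of the maximum visible perimeter over all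
stacking orders (enumerations). -/
def vinf (n : ℕ) : ℝ≥0∞ :=
  ⨅ (p : Fin n → Pt) (_ : Function.Injective p),
    ⨆ σ : Equiv.Perm (Fin n), vis (p ∘ σ)

/-- A set of `n` points is `C`-dense if its maximum pairwise distance is at most
`C · n^{1/2}` times its minimum (nonzero) pairwise distance. -/
def CDense {n : ℕ} (C : ℝ) (p : Fin n → Pt) : Prop :=
  ∀ i j k l : Fin n, k ≠ l →
    dist (p i) (p j) ≤ C * Real.sqrt n * dist (p k) (p l)

/- The perimeter of the convex hull of `Q`: the 1-dimensional Hausdorff measure of its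
boundary if the hull has nonempty interior, and otherwise (hull is a point or a segment)
twice its diameter (= twice its length; `0` for a point or the empty set). -/
open Classical in
def per (Q : Set Pt) : ℝ≥0∞ :=
  if (interior (convexHull ℝ Q)).Nonempty then μH[1] (frontier (convexHull ℝ Q))
  else 2 * EMetric.diam (convexHull ℝ Q)

/-- The `k × k` integer grid `{1, …, k} × {1, …, k}` in the plane. -/
def grid (k : ℕ) : Set Pt :=
  {x | ∃ a b : ℕ, 1 ≤ a ∧ a ≤ k ∧ 1 ≤ b ∧ b ≤ k ∧ x 0 = (a : ℝ) ∧ x 1 = (b : ℝ)}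

/-!
Shrinking the configuration by `ε ∈ (0, 1]` can only hide more of each circle. Translate the
circle around `ε • p i` onto the circle around `p i`: a point `ε • p i + u` with `‖u‖ = 1` is
uncovered by the disk at `ε • p j` iff `1 ≤ ‖u + ε • (p i - p j)‖`, and since
`t ↦ ‖u + t • d‖` is convex with value `1` at `t = 0`, this persists at `t = 1`. So every
visible arc of `ε • p` is an isometric copy of a subset of the corresponding arc of `p`.
-/

theorem norm_le_norm_add_of_norm_le_norm_add_smul {E : Type*} [SeminormedAddCommGroup E]
    [NormedSpace ℝ E] {u d : E} {ε : ℝ} (hε : 0 < ε) (hε1 : ε ≤ 1)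
    (h : ‖u‖ ≤ ‖u + ε • d‖) : ‖u‖ ≤ ‖u + d‖ := by
  have hconv : ‖u + ε • d‖ ≤ (1 - ε) * ‖u‖ + ε * ‖u + d‖ :=
    calc ‖u + ε • d‖ = ‖(1 - ε) • u + ε • (u + d)‖ := by congr 1; module
      _ ≤ (1 - ε) * ‖u‖ + ε * ‖u + d‖ := by
        refine (norm_add_le _ _).trans_eq ?_
        rw [norm_smul, norm_smul, Real.norm_of_nonneg (by linarith), Real.norm_of_nonneg hε.le]
  nlinarith

section VisibleArc

variable {E ι : Type*} [NormedAddCommGroup E] [LT ι]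

def visibleArc (p : ι → E) (i : ι) : Set E :=
  {x | dist x (p i) = 1 ∧ ∀ j, j < i → 1 ≤ dist x (p j)}

variable [NormedSpace ℝ E] {ε : ℝ}

theorem mapsTo_visibleArc_smul (p : ι → E) (i : ι) (hε : 0 < ε) (hε1 : ε ≤ 1) :
    MapsTo (· + (p i - ε • p i)) (visibleArc (ε • p) i) (visibleArc p i) := by
  rintro x ⟨hxi, hxj⟩
  have hu : ‖x - ε • p i‖ = 1 := by rwa [← dist_eq_norm]
  refine ⟨by rw [dist_eq_norm, ← hu]; congr 1; module, fun j hj => ?_⟩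
  have hshift : x + (p i - ε • p i) - p j = (x - ε • p i) + (p i - p j) := by abel
  have hscaled : x - ε • p j = (x - ε • p i) + ε • (p i - p j) := by module
  have hj' := hxj j hj
  rw [Pi.smul_apply, dist_eq_norm, hscaled, ← hu] at hj'
  rw [dist_eq_norm, hshift, ← hu]
  exact norm_le_norm_add_of_norm_le_norm_add_smul hε hε1 hj'

theorem hausdorffMeasure_visibleArc_smul_le [MeasurableSpace E] [BorelSpace E] (p : ι → E)
    (i : ι) (hε : 0 < ε) (hε1 : ε ≤ 1) (d : ℝ) :
    μH[d] (visibleArc (ε • p) i) ≤ μH[d] (visibleArc p i) := by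
  rw [← (IsometryEquiv.addRight (p i - ε • p i)).hausdorffMeasure_image d]
  exact measure_mono (mapsTo_visibleArc_smul p i hε hε1).image_subset

end VisibleArc

theorem vis_smul_le {n : ℕ} (p : Fin n → Pt) {ε : ℝ} (hε : 0 < ε) (hε1 : ε ≤ 1) :
    vis (fun i => ε • p i) ≤ vis p :=
  Finset.sum_le_sum fun i _ => hausdorffMeasure_visibleArc_smul_le p i hε hε1 1

theorem limsup_vis_scaled_le_vis_general {n : ℕ} (p : Fin n → Pt) :
    Filter.limsup (fun ε : ℝ => vis (fun i => ε • p i)) (𝓝[>] (0 : ℝ)) ≤ vis p := by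
  refine limsup_le_of_le (by isBoundedDefault) ?_
  filter_upwards [Ioc_mem_nhdsGT one_pos] with ε hε using vis_smul_le p hε.1 hε.2

/-- `limsup_{ε→0⁺} vis(εp) ≤ vis(p)`. -/
theorem limsup_vis_scaled_le_vis {n : ℕ} (p : Fin n → Pt) (hp : Function.Injective p) :
    Filter.limsup (fun ε : ℝ => vis (fun i => ε • p i)) (𝓝[>] (0 : ℝ)) ≤ vis p :=
  limsup_vis_scaled_le_vis_general p
end
end

section
/- For every positive integer n there exist n distinct points p_1, …, p_n in ℝ² forming a 4-dense set, such that with the stacking order given by this enumeration, liminf_{ε→0⁺} vis(εp_1, …, εp_n) ≥ n^{3/4}. -/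
open MeasureTheory Filter Set Metric
open scoped ENNReal NNReal Topology

noncomputable section

/-!
Stack the disks along the spiral `p_m = √m · (cos 2√m, sin 2√m)`, `m = 0, …, n - 1`, from
the inside out. For `a < b` and `d = √b - √a`, the distance `|p_a - p_b|` is at least both `d`
and `(√a + √b) sin d`, while `(√a + √b) d = b - a ≥ 1`; so all pairwise distances are at
least `1 / 2`, and the diameter is at most `2√n`.

At every scale `ε ≥ 0`, the unit circle around `ε p_m` stays visible in the directions
`2√m + ψ`, `0 ≤ ψ ≤ w_m := (π/2)((m + 1)^{3/4} - m^{3/4})`: since `√m · w_m² ≤ π² / 4`,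
in each such direction `u` the point `p_m` lies beyond every earlier point, `⟪p_m - p_j, u⟫ ≥ 0`,
and then `ε p_m + u` is outside the open unit disk around `ε p_j`. Projecting this arc to a line
shows that its length is at least `sin w_m ≥ (m + 1)^{3/4} - m^{3/4}`, and these bounds
telescope to `n^{3/4}`.
-/

open scoped RealInnerProductSpace
open Real

lemma one_le_dist_add_of_inner_nonneg {E : Type*} [NormedAddCommGroup E] [InnerProductSpace ℝ E]
    {x y u : E} (hu : ‖u‖ = 1) (h : 0 ≤ ⟪x - y, u⟫) : 1 ≤ dist (x + u) y := by
  have hsq : ‖x - y + u‖ ^ 2 = ‖x - y‖ ^ 2 + 2 * ⟪x - y, u⟫ + 1 := by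
    rw [norm_add_sq_real, hu, one_pow]
  rw [dist_eq_norm, show x + u - y = x - y + u by abel]
  nlinarith [norm_nonneg (x - y + u), sq_nonneg ‖x - y‖]

lemma LipschitzWith.volume_image_le_hausdorffMeasure {X : Type*} [EMetricSpace X]
    [MeasurableSpace X] [BorelSpace X] {f : X → ℝ} (hf : LipschitzWith 1 f) (s : Set X) :
    volume (f '' s) ≤ μH[1] s := by
  simpa [hausdorffMeasure_real] using hf.hausdorffMeasure_image_le zero_le_one s

lemma cos_le_cos_of_le_two_pi_sub {ψ x : ℝ} (hψ : 0 ≤ ψ) (hψx : ψ ≤ x) (hx : x ≤ 2 * π - ψ) :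
    cos x ≤ cos ψ := by
  rcases le_total x π with hxπ | hπx
  · exact cos_le_cos_of_nonneg_of_le_pi hψ hxπ hψx
  · rw [← cos_two_pi_sub x]
    exact cos_le_cos_of_nonneg_of_le_pi hψ (by linarith) (by linarith)

lemma mul_cos_le_mul_cos {ρ r ψ : ℝ} (hρ : 0 ≤ ρ) (hρr : ρ ≤ r) (hψ : 0 ≤ ψ) (hψπ : ψ ≤ π / 2)
    (hrψ : r * ψ ^ 2 ≤ π ^ 2 / 4) : ρ * cos (2 * (r - ρ) + ψ) ≤ r * cos ψ := by
  by_cases hcos : cos (2 * (r - ρ) + ψ) ≤ cos ψ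
  · have hcosψ : 0 ≤ cos ψ := cos_nonneg_of_mem_Icc ⟨by linarith [pi_pos], hψπ⟩
    calc ρ * cos (2 * (r - ρ) + ψ) ≤ ρ * cos ψ := mul_le_mul_of_nonneg_left hcos hρ
      _ ≤ r * cos ψ := mul_le_mul_of_nonneg_right hρr hcosψ
  · -- the angle `2 (r - ρ) + ψ` has wound past a full turn, so `ρ` is far below `r`
    have hfar : π - ψ < r - ρ := by
      by_contra! h
      exact hcos (cos_le_cos_of_le_two_pi_sub hψ (by linarith) (by linarith))
    have hleft : ρ * cos (2 * (r - ρ) + ψ) ≤ ρ := mul_le_of_le_one_right hρ (cos_le_one _)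
    have hright : r - r * ψ ^ 2 / 2 ≤ r * cos ψ := by
      nlinarith [one_sub_sq_div_two_le_cos (x := ψ)]
    nlinarith [pi_le_four, pi_pos]

def unitVec (t : ℝ) : Pt := !₂[cos t, sin t]

lemma inner_unitVec (s t : ℝ) : ⟪unitVec s, unitVec t⟫ = cos (s - t) := by
  simp [PiLp.inner_apply, unitVec, Fin.sum_univ_two, cos_sub]
  ring

lemma norm_unitVec (t : ℝ) : ‖unitVec t‖ = 1 := by
  rw [norm_eq_sqrt_real_inner, inner_unitVec, sub_self, cos_zero, sqrt_one]

lemma norm_smul_unitVec_sub_smul_unitVec_sq (r s α β : ℝ) :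
    ‖r • unitVec α - s • unitVec β‖ ^ 2 =
      (r + s) ^ 2 * sin ((α - β) / 2) ^ 2 + (r - s) ^ 2 * cos ((α - β) / 2) ^ 2 := by
  have hcos : cos (α - β) = 2 * cos ((α - β) / 2) ^ 2 - 1 := by
    rw [← cos_two_mul]; ring_nf
  rw [norm_sub_sq_real, norm_smul, norm_smul, norm_unitVec, norm_unitVec, real_inner_smul_left,
    real_inner_smul_right, inner_unitVec, hcos]
  simp only [Real.norm_eq_abs, mul_one, sq_abs]
  linear_combination -(r + s) ^ 2 * sin_sq_add_cos_sq ((α - β) / 2)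

lemma ofReal_sin_le_hausdorffMeasure_of_arc_subset {S : Set Pt} {c : Pt} {θ w : ℝ} (hw : 0 ≤ w)
    (hS : ∀ ψ ∈ Icc 0 w, c + unitVec (θ + ψ) ∈ S) : ENNReal.ofReal (sin w) ≤ μH[1] S := by
  set f : Pt → ℝ := fun x => ⟪x - c, unitVec (θ + π / 2)⟫
  have hf : LipschitzWith 1 f := LipschitzWith.of_dist_le_mul fun x y => by
    simpa [f, Real.dist_eq, ← inner_sub_left, norm_unitVec, dist_eq_norm] using
      abs_real_inner_le_norm (x - y) (unitVec (θ + π / 2))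
  have hf_arc (ψ : ℝ) : f (c + unitVec (θ + ψ)) = sin ψ := by
    simp only [f, add_sub_cancel_left, inner_unitVec]
    rw [show θ + ψ - (θ + π / 2) = ψ - π / 2 by ring, cos_sub_pi_div_two]
  have hsub : Icc 0 (sin w) ⊆ f '' S := by
    intro y hy
    obtain ⟨ψ, hψ, rfl⟩ :=
      intermediate_value_Icc hw continuous_sin.continuousOn (by simpa using hy)
    exact ⟨_, hS ψ hψ, hf_arc ψ⟩
  calc ENNReal.ofReal (sin w) = volume (Icc 0 (sin w)) := by rw [volume_Icc, sub_zero]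
    _ ≤ volume (f '' S) := measure_mono hsub
    _ ≤ μH[1] S := hf.volume_image_le_hausdorffMeasure S

lemma rpow_quarter_mul_rpow_three_quarters_sub_le_one {x : ℝ} (hx : 0 ≤ x) :
    x ^ (1 / 4 : ℝ) * ((x + 1) ^ (3 / 4 : ℝ) - x ^ (3 / 4 : ℝ)) ≤ 1 := by
  have hsplit {y : ℝ} (hy : 0 ≤ y) : y ^ (1 / 4 : ℝ) * y ^ (3 / 4 : ℝ) = y := by
    rw [← rpow_add' hy (by norm_num)]; norm_num
  have hmono : x ^ (1 / 4 : ℝ) ≤ (x + 1) ^ (1 / 4 : ℝ) :=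
    rpow_le_rpow hx (by linarith) (by norm_num)
  have hcross := mul_le_mul_of_nonneg_right hmono (by positivity : 0 ≤ (x + 1) ^ (3 / 4 : ℝ))
  rw [hsplit (by linarith)] at hcross
  rw [mul_sub, hsplit hx]
  linarith

/-- The factor `π / 2` makes Jordan's inequality `sin w ≥ 2w / π` return exactly the
increment of `x ↦ x^{3/4}`. -/
def visibleAngle (k : ℕ) : ℝ := π / 2 * (((k : ℝ) + 1) ^ (3 / 4 : ℝ) - (k : ℝ) ^ (3 / 4 : ℝ))

lemma rpow_three_quarters_increment_nonneg (k : ℕ) :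
    0 ≤ ((k : ℝ) + 1) ^ (3 / 4 : ℝ) - (k : ℝ) ^ (3 / 4 : ℝ) :=
  sub_nonneg.2 (rpow_le_rpow k.cast_nonneg (by linarith) (by norm_num))

lemma visibleAngle_nonneg (k : ℕ) : 0 ≤ visibleAngle k :=
  mul_nonneg (by positivity) (rpow_three_quarters_increment_nonneg k)

lemma visibleAngle_le_pi_div_two (k : ℕ) : visibleAngle k ≤ π / 2 := by
  have h := rpow_add_le_add_rpow (k.cast_nonneg : (0 : ℝ) ≤ k) zero_le_one
    (by norm_num : (0 : ℝ) ≤ 3 / 4) (by norm_num)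
  rw [one_rpow] at h
  exact mul_le_of_le_one_right (by positivity) (by linarith)

lemma sqrt_mul_visibleAngle_sq_le (k : ℕ) : √k * visibleAngle k ^ 2 ≤ π ^ 2 / 4 := by
  have hsqrt : √(k : ℝ) = ((k : ℝ) ^ (1 / 4 : ℝ)) ^ 2 := by
    rw [sqrt_eq_rpow, ← rpow_natCast, ← rpow_mul k.cast_nonneg]; norm_num
  have h := rpow_quarter_mul_rpow_three_quarters_sub_le_one (k.cast_nonneg : (0 : ℝ) ≤ k)
  have h0 : 0 ≤ (k : ℝ) ^ (1 / 4 : ℝ) * (((k : ℝ) + 1) ^ (3 / 4 : ℝ) - (k : ℝ) ^ (3 / 4 : ℝ)) :=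
    mul_nonneg (by positivity) (rpow_three_quarters_increment_nonneg k)
  have hsq := pow_le_one₀ h0 h (n := 2)
  calc √(k : ℝ) * visibleAngle k ^ 2
      = π ^ 2 / 4 * ((k : ℝ) ^ (1 / 4 : ℝ) *
          (((k : ℝ) + 1) ^ (3 / 4 : ℝ) - (k : ℝ) ^ (3 / 4 : ℝ))) ^ 2 := by
        rw [visibleAngle, hsqrt]; ring
    _ ≤ π ^ 2 / 4 := mul_le_of_le_one_right (by positivity) hsq

lemma rpow_three_quarters_increment_le_sin_visibleAngle (k : ℕ) :
    ((k : ℝ) + 1) ^ (3 / 4 : ℝ) - (k : ℝ) ^ (3 / 4 : ℝ) ≤ sin (visibleAngle k) := by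
  have h := mul_le_sin (visibleAngle_nonneg k) (visibleAngle_le_pi_div_two k)
  rwa [visibleAngle, ← mul_assoc, div_mul_div_comm, mul_comm 2 π, div_self (by positivity),
    one_mul] at h

def spiral (m : ℕ) : Pt := √m • unitVec (2 * √m)

lemma norm_spiral (m : ℕ) : ‖spiral m‖ = √m := by
  rw [spiral, norm_smul, norm_unitVec, mul_one, norm_of_nonneg (sqrt_nonneg _)]

lemma dist_spiral_sq (a b : ℕ) :
    dist (spiral a) (spiral b) ^ 2 =
      (√a + √b) ^ 2 * sin (√b - √a) ^ 2 + (√b - √a) ^ 2 * cos (√b - √a) ^ 2 := by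
  rw [dist_eq_norm, spiral, spiral, norm_smul_unitVec_sub_smul_unitVec_sq,
    show (2 * √a - 2 * √b) / 2 = -(√b - √a) by ring, sin_neg, cos_neg]
  ring

lemma half_le_dist_spiral {a b : ℕ} (hab : a ≠ b) : 1 / 2 ≤ dist (spiral a) (spiral b) := by
  wlog hlt : a < b generalizing a b
  · rw [dist_comm]; exact this hab.symm (by omega)
  suffices 1 / 4 ≤ dist (spiral a) (spiral b) ^ 2 by
    nlinarith [dist_nonneg (x := spiral a) (y := spiral b)]
  rw [dist_spiral_sq]
  set d := √b - √a
  have hd : 0 < d := sub_pos.2 (sqrt_lt_sqrt a.cast_nonneg (by exact_mod_cast hlt))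
  have hsum : 1 ≤ (√a + √b) * d := by
    have : (√a + √b) * d = √b ^ 2 - √a ^ 2 := by ring
    rw [this, sq_sqrt b.cast_nonneg, sq_sqrt a.cast_nonneg]
    have : (a : ℝ) + 1 ≤ b := by exact_mod_cast hlt
    linarith
  rcases le_or_gt (1 / 2) d with hd_large | hd_small
  · have hgap : d ^ 2 ≤ (√a + √b) ^ 2 :=
      pow_le_pow_left₀ hd.le (by linarith [sqrt_nonneg (a : ℝ)]) 2
    nlinarith [sin_sq_add_cos_sq d, mul_le_mul_of_nonneg_right hgap (sq_nonneg (sin d))]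
  · have hjordan := mul_le_sin hd.le (by linarith [pi_gt_three])
    have hproj : 2 / π ≤ (√a + √b) * sin d := by
      calc 2 / π ≤ 2 / π * ((√a + √b) * d) := le_mul_of_one_le_right (by positivity) hsum
        _ = (√a + √b) * (2 / π * d) := by ring
        _ ≤ (√a + √b) * sin d := mul_le_mul_of_nonneg_left hjordan (by positivity)
    have hπ : 1 / 2 ≤ 2 / π := by rw [div_le_div_iff₀ (by norm_num) pi_pos]; linarith [pi_le_four]
    nlinarith [sq_nonneg (cos d), sq_nonneg d]

lemma spiral_injective : Function.Injective spiral := fun a b hab => by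
  by_contra hne
  have := half_le_dist_spiral hne
  rw [hab, dist_self] at this
  norm_num at this

lemma dist_spiral_le {a b n : ℕ} (ha : a ≤ n) (hb : b ≤ n) :
    dist (spiral a) (spiral b) ≤ 2 * √n := by
  have h := dist_le_norm_add_norm (spiral a) (spiral b)
  rw [norm_spiral, norm_spiral] at h
  linarith [sqrt_le_sqrt (by exact_mod_cast ha : (a : ℝ) ≤ n),
    sqrt_le_sqrt (by exact_mod_cast hb : (b : ℝ) ≤ n)]

lemma inner_spiral_sub_spiral_nonneg {i j : ℕ} (hji : j ≤ i) {ψ : ℝ}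
    (hψ : ψ ∈ Icc 0 (visibleAngle i)) :
    0 ≤ ⟪spiral i - spiral j, unitVec (2 * √i + ψ)⟫ := by
  have hψsq : √i * ψ ^ 2 ≤ π ^ 2 / 4 :=
    (mul_le_mul_of_nonneg_left (pow_le_pow_left₀ hψ.1 hψ.2 2) (sqrt_nonneg _)).trans
      (sqrt_mul_visibleAngle_sq_le i)
  have key := mul_cos_le_mul_cos (sqrt_nonneg j) (sqrt_le_sqrt (by exact_mod_cast hji)) hψ.1
    (hψ.2.trans (visibleAngle_le_pi_div_two i)) hψsq
  rw [inner_sub_left, spiral, spiral, real_inner_smul_left, real_inner_smul_left, inner_unitVec,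
    inner_unitVec, show 2 * √i - (2 * √i + ψ) = -ψ by ring,
    show 2 * √j - (2 * √i + ψ) = -(2 * (√i - √j) + ψ) by ring, cos_neg, cos_neg]
  linarith

lemma rpow_three_quarters_increment_le_hausdorffMeasure_visible {n : ℕ} {ε : ℝ} (hε : 0 ≤ ε)
    (i : Fin n) :
    ENNReal.ofReal (((i : ℝ) + 1) ^ (3 / 4 : ℝ) - (i : ℝ) ^ (3 / 4 : ℝ)) ≤
      μH[1] {x : Pt | dist x (ε • spiral i) = 1 ∧
        ∀ j : Fin n, j < i → 1 ≤ dist x (ε • spiral j)} := by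
  refine (ENNReal.ofReal_le_ofReal (rpow_three_quarters_increment_le_sin_visibleAngle i)).trans
    (ofReal_sin_le_hausdorffMeasure_of_arc_subset (c := ε • spiral i) (θ := 2 * √i)
      (visibleAngle_nonneg i) ?_)
  intro ψ hψ
  refine ⟨by rw [dist_self_add_left, norm_unitVec], fun j hj => ?_⟩
  refine one_le_dist_add_of_inner_nonneg (norm_unitVec _) ?_
  rw [← smul_sub, real_inner_smul_left]
  exact mul_nonneg hε (inner_spiral_sub_spiral_nonneg hj.le hψ)

lemma rpow_three_quarters_le_vis_smul_spiral (n : ℕ) {ε : ℝ} (hε : 0 ≤ ε) :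
    ENNReal.ofReal ((n : ℝ) ^ (3 / 4 : ℝ)) ≤ vis (fun i : Fin n => ε • spiral i) := by
  have htelescope : ∑ i : Fin n, (((i : ℝ) + 1) ^ (3 / 4 : ℝ) - (i : ℝ) ^ (3 / 4 : ℝ)) =
      (n : ℝ) ^ (3 / 4 : ℝ) := by
    rw [Fin.sum_univ_eq_sum_range (fun i => ((i : ℝ) + 1) ^ (3 / 4 : ℝ) - (i : ℝ) ^ (3 / 4 : ℝ)),
      ← sub_zero ((n : ℝ) ^ (3 / 4 : ℝ)), ← zero_rpow (by norm_num : (3 / 4 : ℝ) ≠ 0)]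
    exact_mod_cast Finset.sum_range_sub (fun i : ℕ => (i : ℝ) ^ (3 / 4 : ℝ)) n
  rw [← htelescope, vis, ENNReal.ofReal_sum_of_nonneg fun (i : Fin n) _ =>
    rpow_three_quarters_increment_nonneg i]
  exact Finset.sum_le_sum fun i _ => rpow_three_quarters_increment_le_hausdorffMeasure_visible hε i

theorem exists_cDense_liminf_vis_ge_general (n : ℕ) :
    ∃ p : Fin n → Pt, Function.Injective p ∧ CDense 4 p ∧
      ENNReal.ofReal ((n : ℝ) ^ ((3 : ℝ) / 4)) ≤
        Filter.liminf (fun ε : ℝ => vis (fun i => ε • p i)) (𝓝[>] (0 : ℝ)) := by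
  refine ⟨fun i => spiral i, spiral_injective.comp Fin.val_injective, ?_, ?_⟩
  · intro i j k l hkl
    calc dist (spiral i) (spiral j) ≤ 2 * √n := dist_spiral_le i.is_lt.le j.is_lt.le
      _ = 4 * √n * (1 / 2) := by ring
      _ ≤ 4 * √n * dist (spiral k) (spiral l) :=
        mul_le_mul_of_nonneg_left (half_le_dist_spiral (Fin.val_injective.ne hkl)) (by positivity)
  · exact le_liminf_of_le (h := eventually_nhdsWithin_of_forall fun ε hε =>
      rpow_three_quarters_le_vis_smul_spiral n (le_of_lt hε))

/-- a 4-dense `n`-point set and a stacking order with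
`liminf_{ε→0⁺} vis(εp) ≥ n^{3/4}`. -/
theorem exists_cDense_liminf_vis_ge (n : ℕ) (hn : 0 < n) :
    ∃ p : Fin n → Pt, Function.Injective p ∧ CDense 4 p ∧
      ENNReal.ofReal ((n : ℝ) ^ ((3 : ℝ) / 4)) ≤
        Filter.liminf (fun ε : ℝ => vis (fun i => ε • p i)) (𝓝[>] (0 : ℝ)) :=
  exists_cDense_liminf_vis_ge_general n
end
end
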